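/- arXiv:2109.13391 — 7 statements merged into one kernel-verified Lean document; each statement's English description precedes it below -/
import Mathlib

section
/- Let d ≥ 1, let σ be the uniform probability measure on the unit sphere S^{d−1} ⊂ ℝ^d, let H be a symmetric positive definite d×d real matrix with μ·I ⪯ H ⪯ L·I for some 0 < μ ≤ L, and let g ∈ ℝ^d be nonzero. Then ∫_{S^{d−1}} (uᵀg)² / ((uᵀHu)·(gᵀH⁻¹g)) dσ(u) ≥ μ/(dL). -/
/-!
The surface measure on the sphere is invariant under linear isometries, and a reflection carries
any vector to any other of the same norm, so `∫ ⟪u, g⟫² dσ` depends on `g` only through `‖g‖`;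
summing over an orthonormal basis (Parseval) then gives `∫ ⟪u, g⟫² dσ = ‖g‖² / d` for the uniform
probability measure. On the other hand `uᵀHu ≤ L` on the sphere, and `gᵀH⁻¹g ≤ ‖g‖² / μ`
(coercivity of `H` at `w = H⁻¹g` together with Cauchy–Schwarz for `gᵀw`), so the integrand is at
least `μ ⟪u, g⟫² / (L ‖g‖²)`, whose mean is `μ / (d L)`.
-/

open MeasureTheory

/-- The uniform probability measure on the unit sphere of `ℝ^d`: the normalized
surface measure obtained from Lebesgue measure via `Measure.toSphere`. -/
noncomputable def uniformSphere (d : ℕ) :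
    Measure (Metric.sphere (0 : EuclideanSpace ℝ (Fin d)) 1) :=
  ((volume : Measure (EuclideanSpace ℝ (Fin d))).toSphere Set.univ)⁻¹ •
    (volume : Measure (EuclideanSpace ℝ (Fin d))).toSphere

open Metric Set Submodule Matrix
open scoped Pointwise RealInnerProductSpace

theorem Continuous.integrable_of_compactSpace {X : Type*} [TopologicalSpace X] [CompactSpace X]
    [MeasurableSpace X] [OpensMeasurableSpace X] {μ : Measure X} [IsFiniteMeasure μ] {f : X → ℝ}
    (hf : Continuous f) : Integrable f μ :=
  (BoundedContinuousFunction.mkOfCompact ⟨f, hf⟩).integrable μ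

theorem div_mul_le_div_mul_of_le {a μ L N Q R : ℝ} (ha : 0 ≤ a) (hμ : 0 < μ) (hμQ : μ ≤ Q)
    (hQL : Q ≤ L) (hR : 0 < R) (hRN : R ≤ N / μ) : μ / (L * N) * a ≤ a / (Q * R) :=
  calc μ / (L * N) * a = a / (L * (N / μ)) := by field_simp
    _ ≤ a / (Q * R) := div_le_div_of_nonneg_left ha (mul_pos (hμ.trans_le hμQ) hR)
      (mul_le_mul hQL hRN hR.le (hμ.le.trans (hμQ.trans hQL)))

namespace LinearIsometryEquiv

variable {E : Type*} [NormedAddCommGroup E]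

section NormedSpace

variable [NormedSpace ℝ E]

noncomputable def restrictUnitSphere (A : E ≃ₗᵢ[ℝ] E) : sphere (0 : E) 1 ≃ₜ sphere (0 : E) 1 :=
  A.toHomeomorph.sets (by simp)

@[simp]
theorem coe_restrictUnitSphere (A : E ≃ₗᵢ[ℝ] E) (u : sphere (0 : E) 1) :
    (A.restrictUnitSphere u : E) = A u :=
  rfl

end NormedSpace

theorem measurePreserving_of_isAddHaarMeasure [InnerProductSpace ℝ E] [FiniteDimensional ℝ E]
    [MeasurableSpace E] [BorelSpace E] (A : E ≃ₗᵢ[ℝ] E) (μ : Measure E) [μ.IsAddHaarMeasure] :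
    MeasurePreserving A μ μ := by
  refine ⟨A.continuous.measurable, ?_⟩
  rw [μ.isAddLeftInvariant_eq_smul volume, Measure.map_smul, A.measurePreserving.map_eq]

end LinearIsometryEquiv

namespace MeasureTheory.Measure

variable {E : Type*} [NormedAddCommGroup E] [MeasurableSpace E] [BorelSpace E]

section NormedSpace

variable [NormedSpace ℝ E]

theorem measurePreserving_restrictUnitSphere (μ : Measure E) (A : E ≃ₗᵢ[ℝ] E)
    (hA : MeasurePreserving A μ μ) :
    MeasurePreserving A.restrictUnitSphere μ.toSphere μ.toSphere := by
  refine ⟨A.restrictUnitSphere.measurable, ?_⟩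
  ext s hs
  rw [map_apply A.restrictUnitSphere.measurable hs, toSphere_apply' _ hs,
    toSphere_apply' _ (A.restrictUnitSphere.measurable hs)]
  have hcone : Ioo (0 : ℝ) 1 • ((↑) '' (A.restrictUnitSphere ⁻¹' s) : Set E) =
      A ⁻¹' (Ioo (0 : ℝ) 1 • ((↑) '' s)) := by
    ext x
    simp only [mem_smul, mem_image, mem_preimage, Subtype.exists, exists_and_right,
      exists_eq_right]
    constructor
    · rintro ⟨r, hr, u, ⟨hu, hs⟩, rfl⟩
      exact ⟨r, hr, A u, ⟨by simpa using hu, hs⟩, by simp⟩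
    · rintro ⟨r, hr, v, ⟨hv, hs⟩, hx⟩
      refine ⟨r, hr, A.symm v, ⟨by simpa using hv, ?_⟩, ?_⟩
      · convert hs
        simp
      · rw [← map_smul, hx, A.symm_apply_apply]
  rw [hcone]
  congr 1
  exact MeasurePreserving.measure_preimage_equiv (f := A.toHomeomorph.toMeasurableEquiv) hA _

theorem integral_toSphere_comp_linearIsometryEquiv (μ : Measure E) (A : E ≃ₗᵢ[ℝ] E)
    (hA : MeasurePreserving A μ μ) (f : E → ℝ) :
    ∫ u : sphere (0 : E) 1, f (A u) ∂μ.toSphere = ∫ u : sphere (0 : E) 1, f u ∂μ.toSphere :=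
  (measurePreserving_restrictUnitSphere μ A hA).integral_comp
    A.restrictUnitSphere.measurableEmbedding (fun u => f u)

instance [FiniteDimensional ℝ E] [Nontrivial E] (μ : Measure E) [μ.IsAddHaarMeasure] :
    NeZero μ.toSphere :=
  ⟨μ.toSphere_ne_zero⟩

end NormedSpace

variable [InnerProductSpace ℝ E] [FiniteDimensional ℝ E]

theorem integral_inner_sq_toSphere_congr (μ : Measure E) [μ.IsAddHaarMeasure] {v w : E}
    (h : ‖v‖ = ‖w‖) :
    ∫ u : sphere (0 : E) 1, ⟪(u : E), v⟫ ^ 2 ∂μ.toSphere =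
      ∫ u : sphere (0 : E) 1, ⟪(u : E), w⟫ ^ 2 ∂μ.toSphere := by
  set R := reflection (ℝ ∙ (v - w))ᗮ
  have hR : ∀ u : E, ⟪u, w⟫ = ⟪R u, v⟫ := fun u => by
    rw [← reflection_sub h, ← R.inner_map_map, reflection_reflection]
  simp_rw [hR]
  exact (integral_toSphere_comp_linearIsometryEquiv μ R (R.measurePreserving_of_isAddHaarMeasure μ)
    (fun x => ⟪x, v⟫ ^ 2)).symm

theorem finrank_mul_integral_inner_sq_toSphere (μ : Measure E) [μ.IsAddHaarMeasure] (g : E) :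
    Module.finrank ℝ E * ∫ u : sphere (0 : E) 1, ⟪(u : E), g⟫ ^ 2 ∂μ.toSphere =
      ‖g‖ ^ 2 * μ.toSphere.real univ := by
  set b := stdOrthonormalBasis ℝ E
  have hint : ∀ v : E, Integrable (fun u : sphere (0 : E) 1 => ⟪(u : E), v⟫ ^ 2) μ.toSphere :=
    fun v => (by fun_prop : Continuous _).integrable_of_compactSpace
  have hparseval : ∀ u : sphere (0 : E) 1, ∑ i, ⟪(u : E), ‖g‖ • b i⟫ ^ 2 = ‖g‖ ^ 2 := fun u => by
    simp_rw [real_inner_smul_right, mul_pow, ← Finset.mul_sum, ← sq_abs ⟪_, b _⟫,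
      ← Real.norm_eq_abs, b.sum_sq_norm_inner_left]
    simp
  calc Module.finrank ℝ E * ∫ u : sphere (0 : E) 1, ⟪(u : E), g⟫ ^ 2 ∂μ.toSphere
      = ∑ i, ∫ u : sphere (0 : E) 1, ⟪(u : E), ‖g‖ • b i⟫ ^ 2 ∂μ.toSphere := by
        rw [Finset.sum_congr rfl fun i _ => integral_inner_sq_toSphere_congr μ
          (v := ‖g‖ • b i) (w := g) (by simp [norm_smul])]
        simp
    _ = ∫ u : sphere (0 : E) 1, ‖g‖ ^ 2 ∂μ.toSphere := by
        rw [← integral_finsetSum _ fun i _ => hint _]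
        simp_rw [hparseval]
    _ = ‖g‖ ^ 2 * μ.toSphere.real univ := by simp [mul_comm]

end MeasureTheory.Measure

instance (d : ℕ) [NeZero d] : IsProbabilityMeasure (uniformSphere d) := by
  constructor
  rw [uniformSphere, Measure.smul_apply, smul_eq_mul]
  exact ENNReal.inv_mul_cancel (NeZero.ne _) (measure_ne_top _ _)

theorem EuclideanSpace.ofLp_dotProduct_self_of_mem_sphere {ι : Type*} [Fintype ι]
    {u : EuclideanSpace ℝ ι} {r : ℝ} (hu : u ∈ sphere 0 r) : u.ofLp ⬝ᵥ u.ofLp = r ^ 2 := by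
  rw [← mem_sphere_zero_iff_norm.1 hu, ← real_inner_self_eq_norm_sq,
    EuclideanSpace.inner_eq_star_dotProduct, star_trivial]

theorem integral_dotProduct_sq_uniformSphere (d : ℕ) [NeZero d] (g : Fin d → ℝ) :
    ∫ u, ((u : EuclideanSpace ℝ (Fin d)).ofLp ⬝ᵥ g) ^ 2 ∂uniformSphere d = (g ⬝ᵥ g) / d := by
  set G : EuclideanSpace ℝ (Fin d) := WithLp.toLp 2 g
  have h := (volume : Measure (EuclideanSpace ℝ (Fin d))).finrank_mul_integral_inner_sq_toSphere G
  have hσ : (volume : Measure (EuclideanSpace ℝ (Fin d))).toSphere.real univ ≠ 0 :=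
    measureReal_univ_ne_zero
  simp only [finrank_euclideanSpace_fin, ← real_inner_self_eq_norm_sq, G,
    EuclideanSpace.inner_eq_star_dotProduct, star_trivial] at h
  rw [uniformSphere, integral_smul_measure, ENNReal.toReal_inv, smul_eq_mul, ← measureReal_def,
    eq_div_iff (NeZero.ne _), inv_mul_eq_div, div_mul_eq_mul_div, mul_comm]
  simp_rw [dotProduct_comm _ g]
  rw [h, mul_div_cancel_right₀ _ hσ]

namespace Matrix

variable {n : Type*} [Fintype n]

theorem sum_sum_mul_mul_eq_dotProduct_mulVec {R : Type*} [CommSemiring R] (A : Matrix n n R)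
    (u v : n → R) : ∑ i, ∑ j, u i * A i j * v j = u ⬝ᵥ (A *ᵥ v) := by
  simp [dotProduct, mulVec, Finset.mul_sum, mul_assoc]

theorem dotProduct_inv_mulVec_le [DecidableEq n] {H : Matrix n n ℝ} (hH : IsUnit H) {μ : ℝ}
    (hμ : 0 < μ) (hlow : ∀ u, μ * (u ⬝ᵥ u) ≤ u ⬝ᵥ (H *ᵥ u)) (g : n → ℝ) :
    g ⬝ᵥ (H⁻¹ *ᵥ g) ≤ (g ⬝ᵥ g) / μ := by
  set w := H⁻¹ *ᵥ g
  have hHw : H *ᵥ w = g := by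
    rw [mulVec_mulVec, mul_nonsing_inv _ ((isUnit_iff_isUnit_det H).1 hH), one_mulVec]
  have hcoercive : μ * (w ⬝ᵥ w) ≤ g ⬝ᵥ w := by
    simpa only [hHw, dotProduct_comm w g] using hlow w
  have hCS : (g ⬝ᵥ w) ^ 2 ≤ (g ⬝ᵥ g) * (w ⬝ᵥ w) := by
    simpa only [dotProduct, sq] using Finset.sum_mul_sq_le_sq_mul_sq Finset.univ g w
  have hg : 0 ≤ g ⬝ᵥ g := by simpa using dotProduct_star_self_nonneg g
  rw [le_div_iff₀ hμ]
  rcases le_or_gt (g ⬝ᵥ w) 0 with hx | hx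
  · nlinarith
  · nlinarith [mul_le_mul_of_nonneg_left hcoercive hg]

end Matrix

/-- Let `σ` be the uniform probability measure on the unit sphere
`S^{d−1} ⊂ ℝ^d`, `H` a symmetric positive definite matrix with `μ·I ⪯ H ⪯ L·I`
(`0 < μ ≤ L`), and `g ≠ 0`.  Then
`∫ (uᵀg)²/((uᵀHu)·(gᵀH⁻¹g)) dσ(u) ≥ μ/(dL)`. -/
theorem eta_uniform_sphere_lower_bound (d : ℕ) (hd : 1 ≤ d)
    (H : Matrix (Fin d) (Fin d) ℝ) (hH : H.PosDef)
    (μ L : ℝ) (hμ : 0 < μ) (hμL : μ ≤ L)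
    (hlow : ∀ u : Fin d → ℝ, μ * ∑ i, u i * u i ≤ ∑ i, ∑ j, u i * H i j * u j)
    (hup : ∀ u : Fin d → ℝ, ∑ i, ∑ j, u i * H i j * u j ≤ L * ∑ i, u i * u i)
    (g : Fin d → ℝ) (hg : g ≠ 0) :
    μ / (d * L) ≤
      ∫ u : Metric.sphere (0 : EuclideanSpace ℝ (Fin d)) 1,
        (∑ i, (u : EuclideanSpace ℝ (Fin d)) i * g i) ^ 2 /
          ((∑ i, ∑ j, (u : EuclideanSpace ℝ (Fin d)) i * H i j *
              (u : EuclideanSpace ℝ (Fin d)) j) *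
            (∑ i, ∑ j, g i * H⁻¹ i j * g j)) ∂(uniformSphere d) := by
  have : NeZero d := ⟨by omega⟩
  simp only [sum_sum_mul_mul_eq_dotProduct_mulVec] at hlow hup ⊢
  simp only [← dotProduct.eq_1] at hlow hup ⊢
  set R := g ⬝ᵥ (H⁻¹ *ᵥ g)
  have hR : 0 < R := by simpa using hH.inv.dotProduct_mulVec_pos hg
  have hRle : R ≤ (g ⬝ᵥ g) / μ := dotProduct_inv_mulVec_le hH.isUnit hμ hlow g
  have hQ : ∀ u : sphere (0 : EuclideanSpace ℝ (Fin d)) 1,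
      μ ≤ (u : EuclideanSpace ℝ (Fin d)).ofLp ⬝ᵥ (H *ᵥ u) ∧
        (u : EuclideanSpace ℝ (Fin d)).ofLp ⬝ᵥ (H *ᵥ u) ≤ L := fun u => by
    simpa [EuclideanSpace.ofLp_dotProduct_self_of_mem_sphere u.2] using And.intro (hlow u) (hup u)
  have hint : Integrable (fun u : sphere (0 : EuclideanSpace ℝ (Fin d)) 1 =>
      ((u : EuclideanSpace ℝ (Fin d)).ofLp ⬝ᵥ g) ^ 2 /
        ((u : EuclideanSpace ℝ (Fin d)).ofLp ⬝ᵥ (H *ᵥ u) * R)) (uniformSphere d) :=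
    Continuous.integrable_of_compactSpace <| Continuous.div (by fun_prop) (by fun_prop)
      fun u => (mul_pos (hμ.trans_le (hQ u).1) hR).ne'
  have hL : 0 < L := hμ.trans_le hμL
  have hg2 : 0 < g ⬝ᵥ g := by simpa using dotProduct_star_self_pos_iff.2 hg
  calc μ / (d * L)
      = ∫ u, μ / (L * (g ⬝ᵥ g)) * ((u : EuclideanSpace ℝ (Fin d)).ofLp ⬝ᵥ g) ^ 2
          ∂uniformSphere d := by
        rw [integral_const_mul, integral_dotProduct_sq_uniformSphere]
        field_simp
    _ ≤ _ := integral_mono_of_nonneg (ae_of_all _ fun u => by positivity) hint <| ae_of_all _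
        fun u => div_mul_le_div_mul_of_le (sq_nonneg _) hμ (hQ u).1 (hQ u).2 hR hRle
end

section
/- Let d ≥ 1, let H be a symmetric positive definite d×d real matrix with μ·I ⪯ H ⪯ L·I for some 0 < μ ≤ L, and let g ∈ ℝ^d be nonzero. Then (1/2^d)·Σ_{u ∈ {−1,1}^d} (uᵀg)² / ((uᵀHu)·(gᵀH⁻¹g)) ≥ μ/(dL). In particular, (1/2^d)·Σ_{u ∈ {−1,1}^d} (uᵀg)² = ‖g‖². -/
/-!
The sign vectors satisfy `∑ₛ uₛ i uₛ j = 2^d δᵢⱼ`, so the average of `(uᵀg)²` over the hypercube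
is `‖g‖²`. The denominators are bounded uniformly: `uᵀHu ≤ L‖u‖² = dL`, and coercivity
`μ‖v‖² ≤ vᵀHv` gives `gᵀH⁻¹g ≤ ‖g‖²/μ`. Hence the average is at least `μ‖g‖²/(dL‖g‖²) = μ/(dL)`.
-/

open Matrix

/-- The hypercube vertex in `{−1,1}^d` associated with a sign pattern `s : Fin d → Bool`. -/
def pmVec (d : ℕ) (s : Fin d → Bool) : Fin d → ℝ := fun i => if s i then 1 else -1

section Coercive

variable {n : Type*} [Fintype n] [DecidableEq n] {H : Matrix n n ℝ} {μ : ℝ}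

lemma isUnit_det_of_coercive (hμ : 0 < μ) (hlow : ∀ u : n → ℝ, μ * (u ⬝ᵥ u) ≤ u ⬝ᵥ (H *ᵥ u)) :
    IsUnit H.det := by
  refine isUnit_iff_ne_zero.mpr fun hdet => ?_
  obtain ⟨v, hv, hHv⟩ := exists_mulVec_eq_zero_iff.mpr hdet
  have hvv : 0 < v ⬝ᵥ v := by simpa using dotProduct_star_self_pos_iff.mpr hv
  have := hlow v
  rw [hHv, dotProduct_zero] at this
  nlinarith

/-- With `v = H⁻¹ g`, the quantity `gᵀH⁻¹g` equals `vᵀHv ≥ μ‖v‖²`, and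
`0 ≤ ‖μv - g‖² ≤ ‖g‖² - μ·gᵀH⁻¹g`. -/
lemma dotProduct_inv_mulVec_pos_and_le_of_coercive (hμ : 0 < μ)
    (hlow : ∀ u : n → ℝ, μ * (u ⬝ᵥ u) ≤ u ⬝ᵥ (H *ᵥ u)) {g : n → ℝ} (hg : g ≠ 0) :
    0 < g ⬝ᵥ (H⁻¹ *ᵥ g) ∧ g ⬝ᵥ (H⁻¹ *ᵥ g) ≤ (g ⬝ᵥ g) / μ := by
  set v := H⁻¹ *ᵥ g
  have hHv : H *ᵥ v = g := by
    rw [mulVec_mulVec, mul_nonsing_inv _ (isUnit_det_of_coercive hμ hlow), one_mulVec]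
  have hv : v ≠ 0 := by
    rintro h
    exact hg (by rw [← hHv, h, mulVec_zero])
  have hvHv : μ * (v ⬝ᵥ v) ≤ g ⬝ᵥ v := by
    rw [dotProduct_comm g v, ← hHv]
    exact hlow v
  have hvv : 0 < v ⬝ᵥ v := by simpa using dotProduct_star_self_pos_iff.mpr hv
  have hsq : 0 ≤ (μ • v - g) ⬝ᵥ (μ • v - g) := Fintype.sum_nonneg fun i => mul_self_nonneg _
  refine ⟨by nlinarith, (le_div_iff₀ hμ).mpr ?_⟩
  simp only [sub_dotProduct, dotProduct_sub, smul_dotProduct, dotProduct_smul, smul_eq_mul,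
    dotProduct_comm v g] at hsq
  nlinarith

end Coercive

section Hypercube

variable {d : ℕ}

lemma pmVec_mul_self (s : Fin d → Bool) (i : Fin d) : pmVec d s i * pmVec d s i = 1 := by
  unfold pmVec; split_ifs <;> norm_num

lemma pmVec_dotProduct_self (s : Fin d → Bool) : pmVec d s ⬝ᵥ pmVec d s = d := by
  simp [dotProduct, pmVec_mul_self]

/-- Flipping the sign of coordinate `j` pairs off the sign patterns with opposite products. -/
lemma sum_pmVec_mul_pmVec_of_ne {i j : Fin d} (hij : i ≠ j) :
    ∑ s : Fin d → Bool, pmVec d s i * pmVec d s j = 0 := by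
  refine Finset.sum_ninvolution (fun s => Function.update s j (!s j)) (fun s => ?_)
    (fun s _ h => by simpa using congrFun h j) (fun _ => Finset.mem_univ _) (fun s => by simp)
  simp only [pmVec, Function.update_of_ne hij, Function.update_self]
  cases s i <;> cases s j <;> norm_num

lemma sum_pmVec_mul_pmVec (i j : Fin d) :
    ∑ s : Fin d → Bool, pmVec d s i * pmVec d s j = if i = j then 2 ^ d else 0 := by
  split_ifs with hij
  · simp [hij, pmVec_mul_self]
  · exact sum_pmVec_mul_pmVec_of_ne hij

lemma sum_pmVec_dotProduct_sq (g : Fin d → ℝ) :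
    ∑ s : Fin d → Bool, (pmVec d s ⬝ᵥ g) ^ 2 = 2 ^ d * (g ⬝ᵥ g) := by
  calc ∑ s : Fin d → Bool, (pmVec d s ⬝ᵥ g) ^ 2
      = ∑ i, ∑ j, (∑ s : Fin d → Bool, pmVec d s i * pmVec d s j) * (g i * g j) := by
        simp_rw [sq, dotProduct, Finset.sum_mul_sum, Finset.sum_mul]
        rw [Finset.sum_comm]
        refine Finset.sum_congr rfl fun i _ => ?_
        rw [Finset.sum_comm]
        exact Finset.sum_congr rfl fun j _ => Finset.sum_congr rfl fun s _ => by ring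
    _ = 2 ^ d * (g ⬝ᵥ g) := by
        simp [sum_pmVec_mul_pmVec, dotProduct, Finset.mul_sum]

end Hypercube

theorem eta_rademacher_lower_bound_general (d : ℕ) (hd : 0 < d)
    (H : Matrix (Fin d) (Fin d) ℝ)
    (μ L : ℝ) (hμ : 0 < μ)
    (hlow : ∀ u : Fin d → ℝ, μ * (u ⬝ᵥ u) ≤ u ⬝ᵥ (H *ᵥ u))
    (hup : ∀ u : Fin d → ℝ, u ⬝ᵥ (H *ᵥ u) ≤ L * (u ⬝ᵥ u))
    (g : Fin d → ℝ) (hg : g ≠ 0) :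
    (μ / (d * L) ≤ (1 / 2 ^ d) * ∑ s : Fin d → Bool,
      (pmVec d s ⬝ᵥ g) ^ 2 /
        ((pmVec d s ⬝ᵥ (H *ᵥ pmVec d s)) * (g ⬝ᵥ (H⁻¹ *ᵥ g)))) ∧
    (1 / 2 ^ d : ℝ) * ∑ s : Fin d → Bool, (pmVec d s ⬝ᵥ g) ^ 2 = g ⬝ᵥ g := by
  have hsecond := sum_pmVec_dotProduct_sq g
  refine ⟨?_, by rw [hsecond]; field_simp⟩
  obtain ⟨hB, hBle⟩ := dotProduct_inv_mulVec_pos_and_le_of_coercive hμ hlow hg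
  have hA (s : Fin d → Bool) :
      0 < pmVec d s ⬝ᵥ (H *ᵥ pmVec d s) ∧ pmVec d s ⬝ᵥ (H *ᵥ pmVec d s) ≤ d * L := by
    have hlow_s := hlow (pmVec d s)
    have hup_s := hup (pmVec d s)
    rw [pmVec_dotProduct_self] at hlow_s hup_s
    exact ⟨lt_of_lt_of_le (by positivity) hlow_s, by linarith⟩
  have hdL : 0 < d * L := (hA fun _ => true).1.trans_le (hA fun _ => true).2
  have hgg : 0 < g ⬝ᵥ g := by simpa using dotProduct_star_self_pos_iff.mpr hg
  calc μ / (d * L)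
      = 1 / 2 ^ d * ∑ s : Fin d → Bool, (pmVec d s ⬝ᵥ g) ^ 2 / (d * L * ((g ⬝ᵥ g) / μ)) := by
        rw [← Finset.sum_div, hsecond]
        field_simp
    _ ≤ _ := by
        gcongr with s
        exacts [mul_pos (hA s).1 hB, (hA s).2]

/-- For a symmetric positive definite `d×d` matrix `H` with `μ·I ⪯ H ⪯ L·I`
(`0 < μ ≤ L`) and a nonzero `g`, averaging over the hypercube vertices `u ∈ {−1,1}^d` gives
`(1/2^d)·Σ_u (uᵀg)²/((uᵀHu)·(gᵀH⁻¹g)) ≥ μ/(dL)`.  In particular,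
`(1/2^d)·Σ_u (uᵀg)² = ‖g‖²`. -/
theorem eta_rademacher_lower_bound (d : ℕ) (hd : 0 < d)
    (H : Matrix (Fin d) (Fin d) ℝ) (hH : H.PosDef)
    (μ L : ℝ) (hμ : 0 < μ) (hμL : μ ≤ L)
    (hlow : ∀ u : Fin d → ℝ, μ * (u ⬝ᵥ u) ≤ u ⬝ᵥ (H *ᵥ u))
    (hup : ∀ u : Fin d → ℝ, u ⬝ᵥ (H *ᵥ u) ≤ L * (u ⬝ᵥ u))
    (g : Fin d → ℝ) (hg : g ≠ 0) :
    (μ / (d * L) ≤ (1 / 2 ^ d) * ∑ s : Fin d → Bool,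
      (pmVec d s ⬝ᵥ g) ^ 2 /
        ((pmVec d s ⬝ᵥ (H *ᵥ pmVec d s)) * (g ⬝ᵥ (H⁻¹ *ᵥ g)))) ∧
    (1 / 2 ^ d : ℝ) * ∑ s : Fin d → Bool, (pmVec d s ⬝ᵥ g) ^ 2 = g ⬝ᵥ g :=
  eta_rademacher_lower_bound_general d hd H μ L hμ hlow hup g hg
end

section
/- Let H be a symmetric positive definite d×d real matrix with μ·I ⪯ H ⪯ L·I for some 0 < μ ≤ L, let g ∈ ℝ^d be nonzero, and let D be a probability measure on ℝ^d \ {0} such that E_{u∼D}[(uᵀg)²/(‖u‖²‖g‖²)] ≥ β for some β > 0. Then E_{u∼D}[(uᵀg)²/((uᵀHu)·(gᵀH⁻¹g))] ≥ β·μ/L. In particular, for every nonzero u ∈ ℝ^d one has the pointwise bound (uᵀg)²/((uᵀHu)(gᵀH⁻¹g)) ≥ (μ/L)·(uᵀg)²/(‖u‖²‖g‖²). -/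
open Matrix MeasureTheory

/-- Let `H` be symmetric positive definite with `μ·I ⪯ H ⪯ L·I` (`0 < μ ≤ L`),
`g ≠ 0`, and `D` a probability measure on `ℝ^d \ {0}` with
`E_{u∼D}[(uᵀg)²/(‖u‖²‖g‖²)] ≥ β > 0`.  Then
`E_{u∼D}[(uᵀg)²/((uᵀHu)(gᵀH⁻¹g))] ≥ β·μ/L`; moreover the pointwise bound
`(uᵀg)²/((uᵀHu)(gᵀH⁻¹g)) ≥ (μ/L)·(uᵀg)²/(‖u‖²‖g‖²)` holds for every nonzero `u`. -/
theorem eta_gradient_aligned_lower_bound (d : ℕ)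
    (H : Matrix (Fin d) (Fin d) ℝ) (hH : H.PosDef)
    (μ L β : ℝ) (hμ : 0 < μ) (hμL : μ ≤ L) (hβ : 0 < β)
    (hlow : ∀ u : Fin d → ℝ, μ * (u ⬝ᵥ u) ≤ u ⬝ᵥ (H *ᵥ u))
    (hup : ∀ u : Fin d → ℝ, u ⬝ᵥ (H *ᵥ u) ≤ L * (u ⬝ᵥ u))
    (g : Fin d → ℝ) (hg : g ≠ 0)
    (D : Measure (Fin d → ℝ)) [IsProbabilityMeasure D] (hD0 : D {0} = 0)
    (hβD : β ≤ ∫ u, (u ⬝ᵥ g) ^ 2 / ((u ⬝ᵥ u) * (g ⬝ᵥ g)) ∂D) :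
    (β * μ / L ≤
      ∫ u, (u ⬝ᵥ g) ^ 2 / ((u ⬝ᵥ (H *ᵥ u)) * (g ⬝ᵥ (H⁻¹ *ᵥ g))) ∂D) ∧
    (∀ u : Fin d → ℝ, u ≠ 0 →
      μ / L * ((u ⬝ᵥ g) ^ 2 / ((u ⬝ᵥ u) * (g ⬝ᵥ g))) ≤
        (u ⬝ᵥ g) ^ 2 / ((u ⬝ᵥ (H *ᵥ u)) * (g ⬝ᵥ (H⁻¹ *ᵥ g)))) := by
  have hL : 0 < L := lt_of_lt_of_le hμ hμL
  -- basic nonnegativity facts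
  have hself : ∀ u : Fin d → ℝ, 0 ≤ u ⬝ᵥ u := fun u =>
    Finset.sum_nonneg fun i _ => mul_self_nonneg _
  have hgg : 0 < g ⬝ᵥ g :=
    lt_of_le_of_ne (hself g) fun h => hg (dotProduct_self_eq_zero.mp h.symm)
  have huu : ∀ u : Fin d → ℝ, u ≠ 0 → 0 < u ⬝ᵥ u := fun u hu =>
    lt_of_le_of_ne (hself u) fun h => hu (dotProduct_self_eq_zero.mp h.symm)
  -- Cauchy–Schwarz
  have cs : ∀ u : Fin d → ℝ, (u ⬝ᵥ g) ^ 2 ≤ (u ⬝ᵥ u) * (g ⬝ᵥ g) := by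
    intro u
    simpa [dotProduct, sq] using
      Finset.sum_mul_sq_le_sq_mul_sq Finset.univ u g
  -- facts about B := g ⬝ᵥ H⁻¹ g
  set B : ℝ := g ⬝ᵥ (H⁻¹ *ᵥ g) with hBdef
  have hB : 0 < B := by
    have := (hH.inv).re_dotProduct_pos hg
    simpa [hBdef] using this
  have hBle : μ * B ≤ g ⬝ᵥ g := by
    set v : Fin d → ℝ := H⁻¹ *ᵥ g with hvdef
    have hv : H *ᵥ v = g := by
      rw [hvdef, mulVec_mulVec, Matrix.mul_nonsing_inv _ hH.det_pos.ne'.isUnit, one_mulVec]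
    have h1 : μ * (v ⬝ᵥ v) ≤ B := by
      have := hlow v
      rw [hv] at this
      rw [hBdef, dotProduct_comm g v]
      exact this
    have h2 : B ^ 2 ≤ (v ⬝ᵥ v) * (g ⬝ᵥ g) := by
      have := cs v
      rwa [dotProduct_comm v g] at this
    nlinarith [hself v, hB, hgg]
  -- positivity of u ⬝ᵥ H u for u ≠ 0
  have hA : ∀ u : Fin d → ℝ, u ≠ 0 → 0 < u ⬝ᵥ (H *ᵥ u) := fun u hu =>
    lt_of_lt_of_le (mul_pos hμ (huu u hu)) (hlow u)
  -- pointwise bound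
  have pw : ∀ u : Fin d → ℝ, u ≠ 0 →
      μ / L * ((u ⬝ᵥ g) ^ 2 / ((u ⬝ᵥ u) * (g ⬝ᵥ g))) ≤
        (u ⬝ᵥ g) ^ 2 / ((u ⬝ᵥ (H *ᵥ u)) * B) := by
    intro u hu
    have huu' := huu u hu
    have hA' := hA u hu
    have hup' := hup u
    have hs : (0:ℝ) ≤ (u ⬝ᵥ g) ^ 2 := sq_nonneg _
    rw [div_mul_div_comm, div_le_div_iff₀ (by positivity) (mul_pos hA' hB)]
    have key : μ * ((u ⬝ᵥ (H *ᵥ u)) * B) ≤ L * ((u ⬝ᵥ u) * (g ⬝ᵥ g)) := by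
      have h1 : (u ⬝ᵥ (H *ᵥ u)) * (μ * B) ≤ (L * (u ⬝ᵥ u)) * (g ⬝ᵥ g) :=
        mul_le_mul hup' hBle (by positivity) (by positivity)
      nlinarith [h1]
    nlinarith [mul_le_mul_of_nonneg_left key hs]
  refine ⟨?_, pw⟩
  -- measurability
  have mdot : ∀ w : Fin d → ℝ, Measurable fun u : Fin d → ℝ => u ⬝ᵥ w := by
    intro w
    simp only [dotProduct]
    exact Finset.measurable_sum _ fun i _ => (measurable_pi_apply i).mul_const _
  have mself : Measurable fun u : Fin d → ℝ => u ⬝ᵥ u := by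
    simp only [dotProduct]
    exact Finset.measurable_sum _ fun i _ =>
      (measurable_pi_apply i).mul (measurable_pi_apply i)
  have mH : Measurable fun u : Fin d → ℝ => u ⬝ᵥ (H *ᵥ u) := by
    simp only [dotProduct, mulVec]
    apply Finset.measurable_sum
    intro i _
    exact (measurable_pi_apply i).mul
      (Finset.measurable_sum _ fun j _ => ((measurable_pi_apply j).const_mul _))
  have m1 : Measurable fun u : Fin d → ℝ => (u ⬝ᵥ g) ^ 2 / ((u ⬝ᵥ u) * (g ⬝ᵥ g)) :=
    ((mdot g).pow_const 2).div (mself.mul_const _)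
  have m2 : Measurable fun u : Fin d → ℝ => (u ⬝ᵥ g) ^ 2 / ((u ⬝ᵥ (H *ᵥ u)) * B) :=
    ((mdot g).pow_const 2).div (mH.mul_const _)
  -- integrability
  have hI1 : Integrable (fun u => (u ⬝ᵥ g) ^ 2 / ((u ⬝ᵥ u) * (g ⬝ᵥ g))) D := by
    refine (integrable_const (1:ℝ)).mono' m1.aestronglyMeasurable ?_
    filter_upwards with u
    rw [Real.norm_eq_abs, abs_of_nonneg (div_nonneg (sq_nonneg _)
      (mul_nonneg (hself u) hgg.le))]
    exact div_le_one_of_le₀ (cs u) (mul_nonneg (hself u) hgg.le)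
  have hAnn : ∀ u : Fin d → ℝ, 0 ≤ u ⬝ᵥ (H *ᵥ u) := fun u =>
    le_trans (mul_nonneg hμ.le (hself u)) (hlow u)
  have hI2 : Integrable (fun u => (u ⬝ᵥ g) ^ 2 / ((u ⬝ᵥ (H *ᵥ u)) * B)) D := by
    refine (integrable_const ((g ⬝ᵥ g) / (μ * B))).mono' m2.aestronglyMeasurable ?_
    filter_upwards with u
    rw [Real.norm_eq_abs, abs_of_nonneg (div_nonneg (sq_nonneg _)
      (mul_nonneg (hAnn u) hB.le))]
    by_cases hu : u = 0
    · subst hu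
      simp only [zero_dotProduct]
      rw [zero_pow (by norm_num), zero_div]
      positivity
    · have huu' := huu u hu
      have hA' := hA u hu
      rw [div_le_div_iff₀ (mul_pos hA' hB) (mul_pos hμ hB)]
      have hmain : μ * (u ⬝ᵥ g) ^ 2 ≤ (g ⬝ᵥ g) * (u ⬝ᵥ (H *ᵥ u)) := by
        nlinarith [mul_le_mul_of_nonneg_left (cs u) hμ.le,
          mul_le_mul_of_nonneg_right (hlow u) hgg.le]
      nlinarith [mul_le_mul_of_nonneg_right hmain hB.le]
  -- a.e. pointwise bound
  have hae : ∀ᵐ u ∂D, μ / L * ((u ⬝ᵥ g) ^ 2 / ((u ⬝ᵥ u) * (g ⬝ᵥ g))) ≤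
      (u ⬝ᵥ g) ^ 2 / ((u ⬝ᵥ (H *ᵥ u)) * B) := by
    have hne : ∀ᵐ u ∂D, u ≠ 0 := by
      rw [ae_iff]
      have hset : {u : Fin d → ℝ | ¬u ≠ 0} = {0} := by ext u; simp
      rw [hset]; exact hD0
    filter_upwards [hne] with u hu using pw u hu
  calc β * μ / L = μ / L * β := by ring
    _ ≤ μ / L * ∫ u, (u ⬝ᵥ g) ^ 2 / ((u ⬝ᵥ u) * (g ⬝ᵥ g)) ∂D :=
        mul_le_mul_of_nonneg_left hβD (by positivity)
    _ = ∫ u, μ / L * ((u ⬝ᵥ g) ^ 2 / ((u ⬝ᵥ u) * (g ⬝ᵥ g))) ∂D :=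
        (integral_const_mul _ _).symm
    _ ≤ ∫ u, (u ⬝ᵥ g) ^ 2 / ((u ⬝ᵥ (H *ᵥ u)) * B) ∂D :=
        integral_mono_ae (hI1.const_mul _) hI2 hae
end

section
/- Let f : ℝ^d → ℝ be twice continuously differentiable with a-Hölder continuous Hessian: there exist a > 0 and L_a > 0 such that |uᵀ(∇²f(x) − ∇²f(y))u| ≤ L_a‖x−y‖^a‖u‖² for all x, y, u ∈ ℝ^d. Then for every x ∈ ℝ^d, every nonzero u ∈ ℝ^d, and every r > 0, the first-order central finite difference satisfies |d_r(x;u) − uᵀ∇f(x)| ≤ (2^{a−1}/((a+1)(a+2)))·L_a·r^{1+a}·‖u‖^{2+a}. -/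
open scoped RealInnerProductSpace

/-! Restricting `f` to the line `t ↦ x + t • u` reduces the claim to one variable. For
`ψ t = g t - g (-t) - 2 t g'(0)` one has `ψ 0 = ψ' 0 = 0` and `ψ'' t = g'' t - g'' (-t)`, which
the Hölder condition bounds by `K (2t)^a`. Two applications of the comparison ("fencing") theorem
for derivatives integrate this bound to `‖ψ r‖ ≤ 2^a K r^(a+2) / ((a+1)(a+2))`. -/

section CentralDifference

variable {E : Type*} [NormedAddCommGroup E] [NormedSpace ℝ E]

theorem hasDerivAt_div_add_one_mul_rpow_add_one {a : ℝ} (ha : 0 ≤ a) (M t : ℝ) :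
    HasDerivAt (fun t => M / (a + 1) * t ^ (a + 1)) (M * t ^ a) t := by
  refine ((Real.hasDerivAt_rpow_const (Or.inr (by linarith))).const_mul _).congr_deriv ?_
  rw [add_sub_cancel_right]
  field_simp

theorem norm_le_of_norm_deriv_le_mul_rpow {φ φ' : ℝ → E} {M a : ℝ} (ha : 0 ≤ a)
    (hφ : ∀ t, HasDerivAt φ (φ' t) t) (hφ0 : φ 0 = 0)
    (hφ' : ∀ t, 0 ≤ t → ‖φ' t‖ ≤ M * t ^ a) {t : ℝ} (ht : 0 ≤ t) :
    ‖φ t‖ ≤ M / (a + 1) * t ^ (a + 1) := by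
  refine image_norm_le_of_norm_deriv_right_le_deriv_boundary (a := 0) (b := t)
    (fun s _ => (hφ s).continuousAt.continuousWithinAt) (fun s _ => (hφ s).hasDerivWithinAt)
    ?_ (hasDerivAt_div_add_one_mul_rpow_add_one ha M) (fun s hs => hφ' s hs.1) ⟨ht, le_rfl⟩
  rw [hφ0, norm_zero, Real.zero_rpow (by linarith), mul_zero]

theorem norm_central_difference_error_le {g g' g'' : ℝ → E} {K a : ℝ} (ha : 0 ≤ a)
    (hg : ∀ t, HasDerivAt g (g' t) t) (hg' : ∀ t, HasDerivAt g' (g'' t) t)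
    (hHolder : ∀ s t, ‖g'' s - g'' t‖ ≤ K * |s - t| ^ a) {r : ℝ} (hr : 0 ≤ r) :
    ‖g r - g (-r) - (2 * r) • g' 0‖ ≤ 2 ^ a * K / ((a + 1) * (a + 2)) * r ^ (a + 2) := by
  have hψ : ∀ t, HasDerivAt (fun t => g t - g (-t) - (2 * t) • g' 0)
      (g' t + g' (-t) - (2 : ℝ) • g' 0) t := fun t =>
    (((hg t).sub ((hg (-t)).scomp t (hasDerivAt_neg t))).sub
      (((hasDerivAt_id t).const_mul 2).smul_const (g' 0))).congr_deriv (by module)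
  have hψ' : ∀ t, HasDerivAt (fun t => g' t + g' (-t) - (2 : ℝ) • g' 0)
      (g'' t - g'' (-t)) t := fun t =>
    (((hg' t).add ((hg' (-t)).scomp t (hasDerivAt_neg t))).sub_const
      ((2 : ℝ) • g' 0)).congr_deriv (by module)
  have hψ'' : ∀ t, 0 ≤ t → ‖g'' t - g'' (-t)‖ ≤ 2 ^ a * K * t ^ a := by
    intro t ht
    calc ‖g'' t - g'' (-t)‖ ≤ K * |t - -t| ^ a := hHolder t (-t)
      _ = 2 ^ a * K * t ^ a := by
        rw [sub_neg_eq_add, ← two_mul, abs_of_nonneg (by linarith), Real.mul_rpow two_pos.le ht]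
        ring
  have hψ'_bound := fun t (ht : 0 ≤ t) => norm_le_of_norm_deriv_le_mul_rpow ha hψ'
    (by simp [two_smul]) hψ'' ht
  have := norm_le_of_norm_deriv_le_mul_rpow (by linarith) hψ (by simp) hψ'_bound hr
  convert this using 1
  rw [show a + 1 + 1 = a + 2 by ring]
  field_simp

end CentralDifference

section LineRestriction

variable {E F : Type*} [NormedAddCommGroup E] [NormedSpace ℝ E] [NormedAddCommGroup F]
  [NormedSpace ℝ F] {f : E → F}

theorem Differentiable.hasDerivAt_comp_add_smul (hf : Differentiable ℝ f) (x u : E) (t : ℝ) :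
    HasDerivAt (fun t : ℝ => f (x + t • u)) (fderiv ℝ f (x + t • u) u) t :=
  (hf _).hasFDerivAt.comp_hasDerivAt t
    (((hasDerivAt_id t).smul_const u).const_add x |>.congr_deriv (one_smul ℝ u))

theorem ContDiff.hasDerivAt_fderiv_comp_add_smul (hf : ContDiff ℝ 2 f) (x u : E) (t : ℝ) :
    HasDerivAt (fun t : ℝ => fderiv ℝ f (x + t • u) u)
      (iteratedFDeriv ℝ 2 f (x + t • u) ![u, u]) t := by
  have hf' : Differentiable ℝ (fderiv ℝ f) :=
    (hf.fderiv_right (m := 1) (by norm_num)).differentiable one_ne_zero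
  have := (hf'.hasDerivAt_comp_add_smul x u t).clm_apply (hasDerivAt_const t u)
  rw [iteratedFDeriv_two_apply]
  simpa using this

end LineRestriction

theorem first_order_central_difference_error_general (d : ℕ)
    (f : EuclideanSpace ℝ (Fin d) → ℝ) (hf : ContDiff ℝ 2 f)
    (a La : ℝ) (ha : 0 < a)
    (hHolder : ∀ x y u : EuclideanSpace ℝ (Fin d),
      |iteratedFDeriv ℝ 2 f x ![u, u] - iteratedFDeriv ℝ 2 f y ![u, u]| ≤
        La * ‖x - y‖ ^ a * ‖u‖ ^ 2)
    (x u : EuclideanSpace ℝ (Fin d)) (r : ℝ) (hr : 0 < r) :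
    |(f (x + r • u) - f (x - r • u)) / (2 * r) - ⟪gradient f x, u⟫| ≤
      2 ^ (a - 1) / ((a + 1) * (a + 2)) * La * r ^ (1 + a) * ‖u‖ ^ (2 + a) := by
  have hHolder_line : ∀ s t : ℝ, ‖iteratedFDeriv ℝ 2 f (x + s • u) ![u, u] -
      iteratedFDeriv ℝ 2 f (x + t • u) ![u, u]‖ ≤ La * ‖u‖ ^ (2 + a) * |s - t| ^ a := by
    intro s t
    calc _ ≤ La * ‖x + s • u - (x + t • u)‖ ^ a * ‖u‖ ^ 2 := hHolder _ _ u
      _ = La * ‖u‖ ^ (2 + a) * |s - t| ^ a := by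
        rw [add_sub_add_left_eq_sub, ← sub_smul, norm_smul, Real.norm_eq_abs,
          Real.mul_rpow (abs_nonneg _) (norm_nonneg u), Real.rpow_add' (norm_nonneg u) (by linarith),
          Real.rpow_two]
        ring
  have hbound := norm_central_difference_error_le ha.le
    ((hf.differentiable (by norm_num)).hasDerivAt_comp_add_smul x u)
    (hf.hasDerivAt_fderiv_comp_add_smul x u) hHolder_line hr.le
  simp only [zero_smul, add_zero, neg_smul, ← sub_eq_add_neg, Real.norm_eq_abs, smul_eq_mul]
    at hbound
  have h2r : 0 < 2 * r := by positivity
  rw [inner_gradient_left, div_sub' h2r.ne', abs_div, abs_of_pos h2r, div_le_iff₀ h2r]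
  calc _ ≤ _ := hbound
    _ = _ := by
      rw [Real.rpow_sub two_pos, Real.rpow_one, show a + 2 = (1 + a) + 1 by ring,
        Real.rpow_add_one hr.ne']
      field_simp

/-- If `f : ℝ^d → ℝ` is twice continuously differentiable with `a`-Hölder
continuous Hessian (constant `L_a > 0`, exponent `a > 0`), then for every `x`, every nonzero
`u`, and every `r > 0`, the first-order central finite difference
`d_r(x;u) = (f(x+ru) − f(x−ru))/(2r)` satisfies
`|d_r(x;u) − uᵀ∇f(x)| ≤ (2^{a−1}/((a+1)(a+2)))·L_a·r^{1+a}·‖u‖^{2+a}`. -/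
theorem first_order_central_difference_error (d : ℕ)
    (f : EuclideanSpace ℝ (Fin d) → ℝ) (hf : ContDiff ℝ 2 f)
    (a La : ℝ) (ha : 0 < a) (hLa : 0 < La)
    (hHolder : ∀ x y u : EuclideanSpace ℝ (Fin d),
      |iteratedFDeriv ℝ 2 f x ![u, u] - iteratedFDeriv ℝ 2 f y ![u, u]| ≤
        La * ‖x - y‖ ^ a * ‖u‖ ^ 2)
    (x u : EuclideanSpace ℝ (Fin d)) (hu : u ≠ 0) (r : ℝ) (hr : 0 < r) :
    |(f (x + r • u) - f (x - r • u)) / (2 * r) - ⟪gradient f x, u⟫| ≤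
      2 ^ (a - 1) / ((a + 1) * (a + 2)) * La * r ^ (1 + a) * ‖u‖ ^ (2 + a) :=
  first_order_central_difference_error_general d f hf a La ha hHolder x u r hr
end

section
/- Let f : ℝ^d → ℝ be twice continuously differentiable with ∇²f(x) positive definite for all x, attain its minimum f⋆, and be μ̂-relatively convex and L̂-relatively smooth with L̂ ≥ μ̂ > 0 (for all x, y: (μ̂/2)(x−y)ᵀ∇²f(y)(x−y) ≤ f(x) − f(y) − ∇f(y)ᵀ(x−y) ≤ (L̂/2)(x−y)ᵀ∇²f(y)(x−y)). Fix x ∈ ℝ^d with g := ∇f(x) ≠ 0 and write H := ∇²f(x). Let D be a probability measure on ℝ^d \ {0} and define η := ∫ (uᵀg)²/((uᵀHu)·(gᵀH⁻¹g)) dD(u). Then the exact-derivative CARS step x_ED(u) = x − (uᵀg/(L̂·uᵀHu))·u satisfies ∫ f(x_ED(u)) dD(u) − f⋆ ≤ (1 − η·μ̂/L̂)·(f(x) − f⋆). In particular, for each fixed nonzero u, f(x_ED(u)) ≤ f(x) − (1/(2L̂))·(uᵀg)²/(uᵀHu). -/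
open scoped RealInnerProductSpace
open MeasureTheory

/-!
Relative smoothness along the line through `x` in direction `u` bounds `f` at the damped Newton
step by `f x - (uᵀg)² / (2 L̂ uᵀHu)`. Relative convexity, combined with the nonnegativity of
`⟪H v, v⟫` at `v = μ̂ (y - x) + H⁻¹ g`, gives `f x - f y ≤ gᵀH⁻¹g / (2 μ̂)` for every `y`, so the
decrease is at least `(μ̂ / L̂) ρ(u) (f x - f⋆)`, where `ρ(u)` is the squared cosine of the angle
between `u` and `H⁻¹ g` in the `H`-inner product. Averaging over `D` gives the claim; everything
is integrable because `0 ≤ ρ ≤ 1` (Cauchy–Schwarz for `H`) and `f` is bounded below by the same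
estimate.
-/

theorem integral_le_sub_mul_integral {α : Type*} [MeasurableSpace α] {D : Measure α}
    [IsProbabilityMeasure D] {φ ρ : α → ℝ} (hφ : Integrable φ D) (hρ : Integrable ρ D)
    {a b : ℝ} (h : ∀ u, φ u ≤ a - b * ρ u) :
    ∫ u, φ u ∂D ≤ a - b * ∫ u, ρ u ∂D := by
  calc ∫ u, φ u ∂D ≤ ∫ u, (a - b * ρ u) ∂D :=
        integral_mono hφ ((integrable_const a).sub (hρ.const_mul b)) h
    _ = a - b * ∫ u, ρ u ∂D := by
        rw [integral_sub (integrable_const a) (hρ.const_mul b), integral_const,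
          integral_const_mul, probReal_univ, one_smul]

theorem div_mul_le_div_of_le {a b c d : ℝ} (ha : 0 ≤ a) (hb : 0 ≤ b) (hc : 0 ≤ c) (hdc : d ≤ c) :
    a / (b * c) * d ≤ a / b := by
  rcases hc.eq_or_lt with rfl | hc
  · simpa using div_nonneg ha hb
  calc a / (b * c) * d ≤ a / (b * c) * c := by gcongr
    _ = a / b := by rw [← div_div, div_mul_cancel₀ _ hc.ne']

section InnerProduct

variable {E : Type*} [NormedAddCommGroup E] [InnerProductSpace ℝ E]

theorem inner_hessian_comm {f : E → ℝ} {x : E} (hf : ContDiffAt ℝ 2 f x) {H : E → E}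
    (hH : ∀ u v, ⟪H u, v⟫ = iteratedFDeriv ℝ 2 f x ![u, v]) (u v : E) :
    ⟪H u, v⟫ = ⟪H v, u⟫ := by
  rw [hH, hH]
  exact IsSymmSndFDerivAt.iteratedFDeriv_cons
    (hf := hf.isSymmSndFDerivAt (by simp [minSmoothness_of_isRCLikeNormedField]))

section Quadratic

variable {H : E ≃L[ℝ] E}

theorem inner_quadratic_symm_nonneg (hsymm : ∀ u v, ⟪H u, v⟫ = ⟪H v, u⟫)
    (hpsd : ∀ u, 0 ≤ ⟪H u, u⟫) (g s : E) (t : ℝ) :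
    0 ≤ t ^ 2 * ⟪H s, s⟫ + 2 * t * ⟪s, g⟫ + ⟪H.symm g, g⟫ := by
  have hw : H (H.symm g) = g := H.apply_symm_apply g
  have hcross : ⟪H s, H.symm g⟫ = ⟪s, g⟫ := by rw [hsymm, hw, real_inner_comm]
  have h := hpsd (t • s + H.symm g)
  simp only [map_add, map_smul, inner_add_left, inner_add_right, real_inner_smul_left,
    real_inner_smul_right, hw, hcross] at h
  rw [real_inner_comm s g, real_inner_comm (H.symm g) g] at h
  linarith

theorem inner_symm_self_nonneg (hpsd : ∀ u, 0 ≤ ⟪H u, u⟫) (g : E) :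
    0 ≤ ⟪H.symm g, g⟫ := by
  simpa only [H.apply_symm_apply, real_inner_comm g] using hpsd (H.symm g)

theorem inner_sq_le_mul_inner_symm (hsymm : ∀ u v, ⟪H u, v⟫ = ⟪H v, u⟫)
    (hpsd : ∀ u, 0 ≤ ⟪H u, u⟫) (g u : E) :
    ⟪u, g⟫ ^ 2 ≤ ⟪H u, u⟫ * ⟪H.symm g, g⟫ := by
  have h := discrim_le_zero (a := ⟪H u, u⟫) (b := 2 * ⟪u, g⟫) (c := ⟪H.symm g, g⟫) fun t =>
    (inner_quadratic_symm_nonneg hsymm hpsd g u t).trans_eq (by ring)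
  rw [discrim] at h
  linarith

theorem two_mul_sub_le_inner_symm (hsymm : ∀ u v, ⟪H u, v⟫ = ⟪H v, u⟫)
    (hpsd : ∀ u, 0 ≤ ⟪H u, u⟫) {f : E → ℝ} {x g : E} {μ : ℝ} (hμ : 0 ≤ μ)
    (hconv : ∀ y, μ / 2 * ⟪H (y - x), y - x⟫ ≤ f y - f x - ⟪g, y - x⟫) (y : E) :
    2 * μ * (f x - f y) ≤ ⟪H.symm g, g⟫ := by
  have hq := inner_quadratic_symm_nonneg hsymm hpsd g (y - x) μ
  rw [real_inner_comm g (y - x)] at hq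
  nlinarith [hconv y]

end Quadratic

/-- The paper's `x_ED(u)`, with `g = ∇f(x)` and `H = ∇²f(x)`. -/
noncomputable def exactStep (H : E → E) (L : ℝ) (x g u : E) : E :=
  x - (⟪u, g⟫ / (L * ⟪H u, u⟫)) • u

theorem relSmooth_exactStep_le {F : Type*} [FunLike F E E] [LinearMapClass F ℝ E E] {H : F}
    {f : E → ℝ} {x g : E} {L : ℝ}
    (hsmooth : ∀ y, f y - f x - ⟪g, y - x⟫ ≤ L / 2 * ⟪H (y - x), y - x⟫) (u : E) :
    f (exactStep H L x g u) ≤ f x - 1 / (2 * L) * (⟪u, g⟫ ^ 2 / ⟪H u, u⟫) := by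
  unfold exactStep
  set c := ⟪u, g⟫ / (L * ⟪H u, u⟫) with hc
  have h := hsmooth (x - c • u)
  simp only [sub_sub_cancel_left, map_neg, map_smul, inner_neg_left, inner_neg_right, neg_neg,
    real_inner_smul_left, real_inner_smul_right, real_inner_comm u g] at h
  -- With the junk values `a / 0 = 0` this also holds for `L = 0` or `⟪H u, u⟫ = 0`.
  have hgain : c * ⟪u, g⟫ - L / 2 * (c * (c * ⟪H u, u⟫)) =
      1 / (2 * L) * (⟪u, g⟫ ^ 2 / ⟪H u, u⟫) := by
    rcases eq_or_ne L 0 with hL | hL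
    · simp [hc, hL]
    rcases eq_or_ne ⟪H u, u⟫ 0 with hq | hq
    · simp [hc, hq]
    rw [hc]
    field_simp
    ring
  linarith

/-- The squared cosine of the angle between `u` and `H⁻¹ g` in the inner product `⟪H ·, ·⟫`;
its mean over the sampling distribution is the paper's `η`. -/
noncomputable def alignment (H : E ≃L[ℝ] E) (g u : E) : ℝ :=
  ⟪u, g⟫ ^ 2 / (⟪H u, u⟫ * ⟪H.symm g, g⟫)

section Descent

variable {H : E ≃L[ℝ] E} {f : E → ℝ} {x g : E} {μ L : ℝ}

theorem alignment_mem_Icc (hsymm : ∀ u v, ⟪H u, v⟫ = ⟪H v, u⟫) (hpsd : ∀ u, 0 ≤ ⟪H u, u⟫)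
    (u : E) : alignment H g u ∈ Set.Icc 0 1 := by
  have hG := inner_symm_self_nonneg hpsd g
  exact ⟨div_nonneg (sq_nonneg _) (mul_nonneg (hpsd u) hG),
    div_le_one_of_le₀ (inner_sq_le_mul_inner_symm hsymm hpsd g u) (mul_nonneg (hpsd u) hG)⟩

theorem exactStep_le_sub_mul_alignment (hsymm : ∀ u v, ⟪H u, v⟫ = ⟪H v, u⟫)
    (hpsd : ∀ u, 0 ≤ ⟪H u, u⟫) (hμ : 0 ≤ μ) (hL : 0 < L)
    (hconv : ∀ y, μ / 2 * ⟪H (y - x), y - x⟫ ≤ f y - f x - ⟪g, y - x⟫)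
    (hsmooth : ∀ y, f y - f x - ⟪g, y - x⟫ ≤ L / 2 * ⟪H (y - x), y - x⟫) (y u : E) :
    f (exactStep H L x g u) ≤ f x - μ * (f x - f y) / L * alignment H g u := by
  have hgain := div_mul_le_div_of_le (sq_nonneg ⟪u, g⟫) (hpsd u) (inner_symm_self_nonneg hpsd g)
    (two_mul_sub_le_inner_symm hsymm hpsd hμ hconv y)
  calc f (exactStep H L x g u) ≤ f x - 1 / (2 * L) * (⟪u, g⟫ ^ 2 / ⟪H u, u⟫) :=
        relSmooth_exactStep_le hsmooth u
    _ ≤ f x - 1 / (2 * L) * (alignment H g u * (2 * μ * (f x - f y))) := by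
        unfold alignment
        gcongr
    _ = f x - μ * (f x - f y) / L * alignment H g u := by ring

theorem integral_exactStep_sub_le [MeasurableSpace E] [BorelSpace E] [SecondCountableTopology E]
    (hsymm : ∀ u v, ⟪H u, v⟫ = ⟪H v, u⟫) (hpsd : ∀ u, 0 ≤ ⟪H u, u⟫) (hf : Continuous f)
    (hμ : 0 < μ) (hμL : μ ≤ L)
    (hconv : ∀ y, μ / 2 * ⟪H (y - x), y - x⟫ ≤ f y - f x - ⟪g, y - x⟫)
    (hsmooth : ∀ y, f y - f x - ⟪g, y - x⟫ ≤ L / 2 * ⟪H (y - x), y - x⟫)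
    (D : Measure E) [IsProbabilityMeasure D] (y : E) :
    ∫ u, f (exactStep H L x g u) ∂D - f y ≤
      (1 - (∫ u, alignment H g u ∂D) * μ / L) * (f x - f y) := by
  have hL := hμ.trans_le hμL
  have hstep_mem (u : E) :
      f (exactStep H L x g u) ∈ Set.Icc (f x - ⟪H.symm g, g⟫ / (2 * μ)) (f x) := by
    refine ⟨?_, (relSmooth_exactStep_le hsmooth u).trans (sub_le_self _ ?_)⟩
    · rw [sub_le_comm, le_div_iff₀ (by positivity)]
      linarith [two_mul_sub_le_inner_symm hsymm hpsd hμ.le hconv (exactStep H L x g u)]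
    · have := hpsd u
      positivity
  have hstep_int : Integrable (fun u => f (exactStep H L x g u)) D :=
    .of_mem_Icc _ _ (hf.measurable.comp (by unfold exactStep; fun_prop)).aemeasurable
      (ae_of_all _ hstep_mem)
  have halign_int : Integrable (alignment H g) D :=
    .of_mem_Icc 0 1 (Measurable.aemeasurable (by unfold alignment; fun_prop))
      (ae_of_all _ (alignment_mem_Icc hsymm hpsd))
  have := integral_le_sub_mul_integral hstep_int halign_int
    (exactStep_le_sub_mul_alignment hsymm hpsd hμ.le hL hconv hsmooth y)
  calc _ ≤ f x - μ * (f x - f y) / L * (∫ u, alignment H g u ∂D) - f y := by linarith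
    _ = _ := by ring

end Descent

end InnerProduct

theorem cars_exact_derivative_descent_general (d : ℕ)
    (f : EuclideanSpace ℝ (Fin d) → ℝ) (hf : ContDiff ℝ 2 f)
    (Hf : EuclideanSpace ℝ (Fin d) → (EuclideanSpace ℝ (Fin d) ≃L[ℝ] EuclideanSpace ℝ (Fin d)))
    (hHf : ∀ x u v : EuclideanSpace ℝ (Fin d), ⟪Hf x u, v⟫ = iteratedFDeriv ℝ 2 f x ![u, v])
    (hpd : ∀ (x u : EuclideanSpace ℝ (Fin d)), u ≠ 0 → 0 < ⟪Hf x u, u⟫)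
    (fstar : ℝ) (hattain : ∃ y, f y = fstar)
    (μhat Lhat : ℝ) (hμhat : 0 < μhat) (hμLhat : μhat ≤ Lhat)
    (hrel : ∀ x y : EuclideanSpace ℝ (Fin d),
      μhat / 2 * ⟪Hf y (x - y), x - y⟫ ≤ f x - f y - ⟪gradient f y, x - y⟫ ∧
      f x - f y - ⟪gradient f y, x - y⟫ ≤ Lhat / 2 * ⟪Hf y (x - y), x - y⟫)
    (x : EuclideanSpace ℝ (Fin d))
    (D : Measure (EuclideanSpace ℝ (Fin d))) [IsProbabilityMeasure D] :
    ((∫ u, f (x - (⟪u, gradient f x⟫ / (Lhat * ⟪Hf x u, u⟫)) • u) ∂D) - fstar ≤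
      (1 - (∫ u, ⟪u, gradient f x⟫ ^ 2 /
              (⟪Hf x u, u⟫ * ⟪(Hf x).symm (gradient f x), gradient f x⟫) ∂D) *
            μhat / Lhat) * (f x - fstar)) ∧
    ∀ u : EuclideanSpace ℝ (Fin d), u ≠ 0 →
      f (x - (⟪u, gradient f x⟫ / (Lhat * ⟪Hf x u, u⟫)) • u) ≤
        f x - 1 / (2 * Lhat) * (⟪u, gradient f x⟫ ^ 2 / ⟪Hf x u, u⟫) := by
  have hsymm := inner_hessian_comm hf.contDiffAt (hHf x)
  have hpsd (u : EuclideanSpace ℝ (Fin d)) : 0 ≤ ⟪Hf x u, u⟫ := by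
    rcases eq_or_ne u 0 with rfl | hu
    · simp
    · exact (hpd x u hu).le
  obtain ⟨y, rfl⟩ := hattain
  exact ⟨integral_exactStep_sub_le hsymm hpsd hf.continuous hμhat hμLhat
      (fun y => (hrel y x).1) (fun y => (hrel y x).2) D y,
    fun u _ => relSmooth_exactStep_le (fun y => (hrel y x).2) u⟩

/-- (Expected descent of CARS with exact derivatives.)  Let `f : ℝ^d → ℝ` be
twice continuously differentiable with positive definite Hessian `Hf x` everywhere, attain its
minimum `f⋆`, and be `μ̂`-relatively convex and `L̂`-relatively smooth with `L̂ ≥ μ̂ > 0`.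
Fix `x` with `g = ∇f(x) ≠ 0`, write `H = ∇²f(x)`, and let `D` be a probability measure on
`ℝ^d \ {0}` with `η = ∫ (uᵀg)²/((uᵀHu)(gᵀH⁻¹g)) dD(u)`.  Then the exact-derivative CARS step
`x_ED(u) = x − (uᵀg/(L̂·uᵀHu))·u` satisfies
`∫ f(x_ED(u)) dD(u) − f⋆ ≤ (1 − η·μ̂/L̂)·(f(x) − f⋆)`, and for each fixed nonzero `u`,
`f(x_ED(u)) ≤ f(x) − (1/(2L̂))·(uᵀg)²/(uᵀHu)`. -/
theorem cars_exact_derivative_descent (d : ℕ)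
    (f : EuclideanSpace ℝ (Fin d) → ℝ) (hf : ContDiff ℝ 2 f)
    (Hf : EuclideanSpace ℝ (Fin d) → (EuclideanSpace ℝ (Fin d) ≃L[ℝ] EuclideanSpace ℝ (Fin d)))
    (hHf : ∀ x u v : EuclideanSpace ℝ (Fin d), ⟪Hf x u, v⟫ = iteratedFDeriv ℝ 2 f x ![u, v])
    (hpd : ∀ (x u : EuclideanSpace ℝ (Fin d)), u ≠ 0 → 0 < ⟪Hf x u, u⟫)
    (fstar : ℝ) (hmin : ∀ y, fstar ≤ f y) (hattain : ∃ y, f y = fstar)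
    (μhat Lhat : ℝ) (hμhat : 0 < μhat) (hμLhat : μhat ≤ Lhat)
    (hrel : ∀ x y : EuclideanSpace ℝ (Fin d),
      μhat / 2 * ⟪Hf y (x - y), x - y⟫ ≤ f x - f y - ⟪gradient f y, x - y⟫ ∧
      f x - f y - ⟪gradient f y, x - y⟫ ≤ Lhat / 2 * ⟪Hf y (x - y), x - y⟫)
    (x : EuclideanSpace ℝ (Fin d)) (hgx : gradient f x ≠ 0)
    (D : Measure (EuclideanSpace ℝ (Fin d))) [IsProbabilityMeasure D] (hD0 : D {0} = 0) :
    ((∫ u, f (x - (⟪u, gradient f x⟫ / (Lhat * ⟪Hf x u, u⟫)) • u) ∂D) - fstar ≤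
      (1 - (∫ u, ⟪u, gradient f x⟫ ^ 2 /
              (⟪Hf x u, u⟫ * ⟪(Hf x).symm (gradient f x), gradient f x⟫) ∂D) *
            μhat / Lhat) * (f x - fstar)) ∧
    ∀ u : EuclideanSpace ℝ (Fin d), u ≠ 0 →
      f (x - (⟪u, gradient f x⟫ / (Lhat * ⟪Hf x u, u⟫)) • u) ≤
        f x - 1 / (2 * Lhat) * (⟪u, gradient f x⟫ ^ 2 / ⟪Hf x u, u⟫) :=
  cars_exact_derivative_descent_general d f hf Hf hHf hpd fstar hattain μhat Lhat hμhat hμLhat hrel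
    x D
end

section
/- Let f : ℝ^d → ℝ be twice continuously differentiable with ∇²f(x) positive definite for all x, attain its minimum value f⋆ at some point x⋆, and be μ̂-relatively convex with μ̂ > 0: f(x) − f(y) − ∇f(y)ᵀ(x−y) ≥ (μ̂/2)(x−y)ᵀ∇²f(y)(x−y) for all x, y. Then for every x ∈ ℝ^d: ∇f(x)ᵀ(∇²f(x))⁻¹∇f(x) ≥ 2μ̂·(f(x) − f⋆). -/
open scoped RealInnerProductSpace

/-!
Write `g = ∇f(x)`, `H = ∇²f(x)` and `u = H⁻¹g`. Relative convexity at `y = x` bounds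
`f⋆ − f(x)` from below by the quadratic `w ↦ ⟪g, w⟫ + (μ̂/2)⟪Hw, w⟫` evaluated at `w = x⋆ − x`.
Since `H` is symmetric (Schwarz) and positive, that quadratic is at least its value
`−⟪u, g⟫ / (2μ̂)` at the minimiser `w = −u/μ̂`, which is the claim.
-/

section InnerProductSpace

variable {E : Type*} [NormedAddCommGroup E] [InnerProductSpace ℝ E]

theorem LinearMap.IsPositive.neg_inner_div_le_inner_add_inner {H : E →ₗ[ℝ] E}
    (hH : H.IsPositive) {c : ℝ} (hc : 0 < c) (u w : E) :
    -(⟪H u, u⟫ / (2 * c)) ≤ ⟪H u, w⟫ + c / 2 * ⟪H w, w⟫ := by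
  -- expand `0 ≤ ⟪H (c • w + u), c • w + u⟫`
  have hsq := hH.inner_nonneg_left (c • w + u)
  have hsymm : ⟪H w, u⟫ = ⟪H u, w⟫ := by
    rw [hH.isSymmetric w u, real_inner_comm]
  simp only [map_add, map_smul, inner_add_left, inner_add_right, real_inner_smul_left,
    real_inner_smul_right, hsymm] at hsq
  rw [neg_le_iff_add_nonneg', div_add' _ _ _ (by positivity)]
  apply div_nonneg _ (by positivity)
  nlinarith

theorem isSymmetric_of_inner_eq_iteratedFDeriv_two {f : E → ℝ} (hf : ContDiff ℝ 2 f) {x : E}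
    {H : E →ₗ[ℝ] E}
    (hH : ∀ u v, ⟪H u, v⟫ = iteratedFDeriv ℝ 2 f x ![u, v]) : H.IsSymmetric := by
  have hschwarz : IsSymmSndFDerivAt ℝ f x :=
    hf.contDiffAt.isSymmSndFDerivAt minSmoothness_of_isRCLikeNormedField.le
  intro u v
  rw [hH, real_inner_comm, hH, hschwarz.iteratedFDeriv_cons]

end InnerProductSpace

theorem relative_PL_inequality_general (d : ℕ)
    (f : EuclideanSpace ℝ (Fin d) → ℝ) (hf : ContDiff ℝ 2 f)
    (Hf : EuclideanSpace ℝ (Fin d) → (EuclideanSpace ℝ (Fin d) ≃L[ℝ] EuclideanSpace ℝ (Fin d)))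
    (hHf : ∀ x u v : EuclideanSpace ℝ (Fin d), ⟪Hf x u, v⟫ = iteratedFDeriv ℝ 2 f x ![u, v])
    (hpd : ∀ (x u : EuclideanSpace ℝ (Fin d)), u ≠ 0 → 0 < ⟪Hf x u, u⟫)
    (fstar : ℝ) (xstar : EuclideanSpace ℝ (Fin d)) (hxstar : f xstar = fstar)
    (μhat : ℝ) (hμhat : 0 < μhat)
    (hrel : ∀ x y : EuclideanSpace ℝ (Fin d),
      μhat / 2 * ⟪Hf y (x - y), x - y⟫ ≤ f x - f y - ⟪gradient f y, x - y⟫) :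
    ∀ x : EuclideanSpace ℝ (Fin d),
      2 * μhat * (f x - fstar) ≤ ⟪(Hf x).symm (gradient f x), gradient f x⟫ := by
  intro x
  have hpos : (Hf x).toLinearEquiv.toLinearMap.IsPositive := by
    refine (LinearMap.isPositive_iff _).2
      ⟨isSymmetric_of_inner_eq_iteratedFDeriv_two hf (hHf x), fun u ↦ ?_⟩
    rcases eq_or_ne u 0 with rfl | hu
    · simp
    · exact (hpd x u hu).le
  have hquad := hpos.neg_inner_div_le_inner_add_inner hμhat ((Hf x).symm (gradient f x))
    (xstar - x)
  have hconv := hrel xstar x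
  simp only [LinearEquiv.coe_coe, ContinuousLinearEquiv.coe_toLinearEquiv,
    ContinuousLinearEquiv.apply_symm_apply] at hquad
  rw [real_inner_comm, neg_le, le_div_iff₀ (by positivity)] at hquad
  nlinarith

/-- (Relative Polyak–Łojasiewicz inequality.)  Let `f : ℝ^d → ℝ` be twice
continuously differentiable with (invertible) positive definite Hessian `Hf x` at every point,
attain its minimum value `f⋆` at some point `x⋆`, and be `μ̂`-relatively convex (`μ̂ > 0`):
`f(x) − f(y) − ∇f(y)ᵀ(x−y) ≥ (μ̂/2)(x−y)ᵀ∇²f(y)(x−y)` for all `x, y`.  Then for every `x`,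
`∇f(x)ᵀ(∇²f(x))⁻¹∇f(x) ≥ 2μ̂·(f(x) − f⋆)`. -/
theorem relative_PL_inequality (d : ℕ)
    (f : EuclideanSpace ℝ (Fin d) → ℝ) (hf : ContDiff ℝ 2 f)
    (Hf : EuclideanSpace ℝ (Fin d) → (EuclideanSpace ℝ (Fin d) ≃L[ℝ] EuclideanSpace ℝ (Fin d)))
    (hHf : ∀ x u v : EuclideanSpace ℝ (Fin d), ⟪Hf x u, v⟫ = iteratedFDeriv ℝ 2 f x ![u, v])
    (hpd : ∀ (x u : EuclideanSpace ℝ (Fin d)), u ≠ 0 → 0 < ⟪Hf x u, u⟫)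
    (fstar : ℝ) (xstar : EuclideanSpace ℝ (Fin d)) (hxstar : f xstar = fstar)
    (hmin : ∀ x, fstar ≤ f x)
    (μhat : ℝ) (hμhat : 0 < μhat)
    (hrel : ∀ x y : EuclideanSpace ℝ (Fin d),
      μhat / 2 * ⟪Hf y (x - y), x - y⟫ ≤ f x - f y - ⟪gradient f y, x - y⟫) :
    ∀ x : EuclideanSpace ℝ (Fin d),
      2 * μhat * (f x - fstar) ≤ ⟪(Hf x).symm (gradient f x), gradient f x⟫ :=
  relative_PL_inequality_general d f hf Hf hHf hpd fstar xstar hxstar μhat hμhat hrel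
end

section
/- Fix M > 0 and define P(α; d, h) = d·α + (h/2)·α² + (M/6)·|α|³ for α, d ∈ ℝ and h ≥ 0. Then for every d ∈ ℝ and h ≥ 0, the function α ↦ P(α; d, h) attains its global minimum over ℝ at the unique point φ(d, h) = −2d/(h + √(h² + 2M|d|)) (understood as 0 when d = 0 and h = 0), this value also equals sign(d)·(h − √(h² + 2M|d|))/M when d ≠ 0, and the minimizer α_min = φ(d, h) satisfies the stationarity identity (M/2)·|α_min|·α_min = −d − h·α_min. Moreover M·|φ(d,h)| ≤ √(2M|d|). -/
/-!
At any solution `a` of the stationarity equation `(M/2)|a|a = -d - ha` the model splits as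
`P(α) - P(a) = (h/2)(α - a)² + (M/6)(|α|³ - |a|³ - 3|a|a(α - a))`, and the second bracket is the
gap in the tangent-line inequality for the strictly convex function `|α|³`, whose derivative is
`3|α|α`; so `a` is the unique global minimiser. The stationarity equation forces `a` to have the
sign opposite to `d`, and then it is a quadratic in `|a|` whose nonnegative root is `φ(d, h)`;
rationalising its denominator gives the `sign d` form.
-/

/-- The one-dimensional cubic-regularized second-order model
`P(α; d, h) = d·α + (h/2)·α² + (M/6)·|α|³`. -/
noncomputable def cubicModel (M d h α : ℝ) : ℝ :=
  d * α + h / 2 * α ^ 2 + M / 6 * |α| ^ 3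

/-- The global minimizer `φ(d, h) = −2d/(h + √(h² + 2M|d|))` of the cubic model
(understood as `0` when `d = 0` and `h = 0`, since in Lean division by zero is zero). -/
noncomputable def cubicMin (M d h : ℝ) : ℝ :=
  -2 * d / (h + Real.sqrt (h ^ 2 + 2 * M * |d|))

theorem Real.sign_mul_abs (r : ℝ) : Real.sign r * |r| = r := by
  rcases lt_trichotomy r 0 with hr | rfl | hr
  · rw [Real.sign_of_neg hr, abs_of_neg hr, neg_one_mul, neg_neg]
  · simp
  · rw [Real.sign_of_pos hr, abs_of_pos hr, one_mul]

lemma abs_pow_three_add_tangent_lt_of_nonneg {x y : ℝ} (hy : 0 ≤ y) (hxy : x ≠ y) :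
    |y| ^ 3 + 3 * |y| * y * (x - y) < |x| ^ 3 := by
  have hd : 0 < (x - y) ^ 2 := by positivity
  rw [abs_of_nonneg hy]
  rcases le_or_gt 0 x with hx | hx
  · rw [abs_of_nonneg hx]
    nlinarith [mul_nonneg hd.le hy]
  · rw [abs_of_neg hx]
    nlinarith [pow_pos (neg_pos.2 hx) 3, pow_nonneg hy 3, mul_nonneg (sq_nonneg y) (neg_pos.2 hx).le]

lemma abs_pow_three_add_tangent_lt {x y : ℝ} (hxy : x ≠ y) :
    |y| ^ 3 + 3 * |y| * y * (x - y) < |x| ^ 3 := by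
  rcases le_or_gt 0 y with hy | hy
  · exact abs_pow_three_add_tangent_lt_of_nonneg hy hxy
  · have := abs_pow_three_add_tangent_lt_of_nonneg (neg_nonneg.2 hy.le) (neg_injective.ne hxy)
    rw [abs_neg, abs_neg] at this
    linarith

section Stationary

variable {M d h a : ℝ}

lemma cubicModel_sub_cubicModel_of_stationary (hstat : M / 2 * |a| * a = -d - h * a) (α : ℝ) :
    cubicModel M d h α - cubicModel M d h a =
      h / 2 * (α - a) ^ 2 + M / 6 * (|α| ^ 3 - (|a| ^ 3 + 3 * |a| * a * (α - a))) := by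
  unfold cubicModel
  linear_combination (α - a) * hstat

lemma cubicModel_lt_of_stationary (hM : 0 < M) (hh : 0 ≤ h)
    (hstat : M / 2 * |a| * a = -d - h * a) {α : ℝ} (hα : α ≠ a) :
    cubicModel M d h a < cubicModel M d h α := by
  have hquad : 0 ≤ h / 2 * (α - a) ^ 2 := by positivity
  have hcubic : 0 < M / 6 * (|α| ^ 3 - (|a| ^ 3 + 3 * |a| * a * (α - a))) :=
    mul_pos (by positivity) (sub_pos.2 (abs_pow_three_add_tangent_lt hα))
  linarith [cubicModel_sub_cubicModel_of_stationary hstat α]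

end Stationary

section CubicMin

variable {M : ℝ} (d h : ℝ)

lemma add_sqrt_sq_add_nonneg (hM : 0 ≤ M) : 0 ≤ h + √(h ^ 2 + 2 * M * |d|) := by
  have : |h| ≤ √(h ^ 2 + 2 * M * |d|) := Real.abs_le_sqrt (by nlinarith [abs_nonneg d])
  linarith [neg_abs_le h]

lemma add_sqrt_sq_add_pos (hM : 0 < M) (hd : d ≠ 0) : 0 < h + √(h ^ 2 + 2 * M * |d|) := by
  have : |h| < √(h ^ 2 + 2 * M * |d|) :=
    (Real.lt_sqrt (abs_nonneg h)).2 (by rw [sq_abs]; nlinarith [abs_pos.2 hd])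
  linarith [neg_abs_le h]

lemma abs_cubicMin (hM : 0 ≤ M) :
    |cubicMin M d h| = 2 * |d| / (h + √(h ^ 2 + 2 * M * |d|)) := by
  rw [cubicMin, abs_div, abs_of_nonneg (add_sqrt_sq_add_nonneg d h hM), abs_mul]
  norm_num

lemma cubicMin_stationary (hM : 0 < M) :
    M / 2 * |cubicMin M d h| * cubicMin M d h = -d - h * cubicMin M d h := by
  rcases eq_or_ne d 0 with rfl | hd
  · simp [cubicMin]
  have hs : √(h ^ 2 + 2 * M * |d|) ^ 2 = h ^ 2 + 2 * M * |d| := Real.sq_sqrt (by positivity)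
  have hden := (add_sqrt_sq_add_pos d h hM hd).ne'
  rw [abs_cubicMin d h hM.le, cubicMin]
  -- keeps `field_simp` from normalising inside the square root, which would break `hs`
  generalize √(h ^ 2 + 2 * M * |d|) = s at hs hden ⊢
  field_simp
  linear_combination hs

lemma cubicMin_eq_sign_mul (hM : 0 < M) (hd : d ≠ 0) :
    cubicMin M d h = Real.sign d * (h - √(h ^ 2 + 2 * M * |d|)) / M := by
  have hs : √(h ^ 2 + 2 * M * |d|) ^ 2 = h ^ 2 + 2 * M * |d| := Real.sq_sqrt (by positivity)
  rw [cubicMin, div_eq_div_iff (add_sqrt_sq_add_pos d h hM hd).ne' hM.ne']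
  linear_combination Real.sign d * hs + 2 * M * Real.sign_mul_abs d

lemma mul_abs_cubicMin_le (hM : 0 ≤ M) (hh : 0 ≤ h) : M * |cubicMin M d h| ≤ √(2 * M * |d|) := by
  have ht : √(2 * M * |d|) ^ 2 = 2 * M * |d| := Real.sq_sqrt (by positivity)
  have hts : √(2 * M * |d|) ≤ √(h ^ 2 + 2 * M * |d|) := Real.sqrt_le_sqrt (by nlinarith)
  calc M * |cubicMin M d h| = √(2 * M * |d|) ^ 2 / (h + √(h ^ 2 + 2 * M * |d|)) := by
        rw [abs_cubicMin d h hM, ht]; ring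
    _ ≤ √(2 * M * |d|) := by
        refine div_le_of_le_mul₀ (add_sqrt_sq_add_nonneg d h hM) (Real.sqrt_nonneg _) ?_
        rw [sq]
        exact mul_le_mul_of_nonneg_left (by linarith) (Real.sqrt_nonneg _)

end CubicMin

/-- For `M > 0`, `d ∈ ℝ`, `h ≥ 0`, the function `α ↦ P(α; d, h)` attains its
global minimum over `ℝ` at the unique point `φ(d, h) = −2d/(h + √(h² + 2M|d|))`; when `d ≠ 0`
this point also equals `sign(d)·(h − √(h² + 2M|d|))/M`; the minimizer `α_min = φ(d, h)` satisfies
the stationarity identity `(M/2)·|α_min|·α_min = −d − h·α_min`; and `M·|φ(d,h)| ≤ √(2M|d|)`. -/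
theorem cubic_model_minimizer (M : ℝ) (hM : 0 < M) (d h : ℝ) (hh : 0 ≤ h) :
    (∀ α : ℝ, cubicModel M d h (cubicMin M d h) ≤ cubicModel M d h α) ∧
    (∀ α : ℝ, cubicModel M d h α = cubicModel M d h (cubicMin M d h) → α = cubicMin M d h) ∧
    (d ≠ 0 → cubicMin M d h = Real.sign d * (h - Real.sqrt (h ^ 2 + 2 * M * |d|)) / M) ∧
    (M / 2 * |cubicMin M d h| * cubicMin M d h = -d - h * cubicMin M d h) ∧
    M * |cubicMin M d h| ≤ Real.sqrt (2 * M * |d|) := by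
  have hstat := cubicMin_stationary d h hM
  have hlt {α : ℝ} : α ≠ cubicMin M d h → cubicModel M d h (cubicMin M d h) < cubicModel M d h α :=
    cubicModel_lt_of_stationary hM hh hstat
  refine ⟨fun α => ?_, fun α hα => ?_, cubicMin_eq_sign_mul d h hM, hstat,
    mul_abs_cubicMin_le d h hM.le hh⟩
  · rcases eq_or_ne α (cubicMin M d h) with rfl | hne
    · exact le_rfl
    · exact (hlt hne).le
  · by_contra hne
    exact (hlt hne).ne' hα
end
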